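/- arXiv:1203.2040 — 2 statements merged into one kernel-verified Lean document; each statement's English description precedes it below -/
import Mathlib

section
/- Let Γ ⊂ P^n_K be a reduced non-degenerate finite set of points and let d(Γ)_a denote its higher minimum distances. If d(Γ)_b ≥ 2 for some integer b ≥ 1, then d(Γ)_a ≥ b − a + 2 for all integers a with 1 ≤ a ≤ b. -/
open MvPolynomial

noncomputable section

namespace PointsMinDist

variable {K : Type} [Field K]

/-- The (homogeneous) vanishing ideal of a set of points of projective space:
all polynomials vanishing at every representative vector of every point. -/
def vanishingIdeal {m : ℕ} (Γ : Set (Projectivization K (Fin m → K))) :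
    Ideal (MvPolynomial (Fin m) K) where
  carrier := {f | ∀ P ∈ Γ, ∀ (v : Fin m → K) (hv : v ≠ 0),
      Projectivization.mk K v hv = P → MvPolynomial.eval v f = 0}
  zero_mem' := by intro P hP v hv h; simp
  add_mem' := by
    intro f g hf hg P hP v hv h
    simp [hf P hP v hv h, hg P hP v hv h]
  smul_mem' := by
    intro c f hf P hP v hv h
    simp [smul_eq_mul, hf P hP v hv h]

/-- The degree-`d` graded component of a (homogeneous) ideal, as a `K`-subspace. -/
def degPart {m : ℕ} (I : Ideal (MvPolynomial (Fin m) K)) (d : ℕ) :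
    Submodule K (MvPolynomial (Fin m) K) :=
  Submodule.restrictScalars K I ⊓ homogeneousSubmodule (Fin m) K d

/-- `K`-dimension of the degree-`d` component of an ideal. -/
def hdim {m : ℕ} (I : Ideal (MvPolynomial (Fin m) K)) (d : ℕ) : ℕ :=
  Module.finrank K (degPart I d)

/-- Hilbert function of `R/I` in degree `d`. -/
def HF {m : ℕ} (I : Ideal (MvPolynomial (Fin m) K)) (d : ℕ) : ℕ :=
  Module.finrank K (homogeneousSubmodule (Fin m) K d) - hdim I d

open Classical in
/-- `hyp Γ`: the maximum number of points of `Γ` contained in a hyperplane. -/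
def hyp {m : ℕ} (Γ : Finset (Projectivization K (Fin m → K))) : ℕ :=
  sSup {k | ∃ φ : Module.Dual K (Fin m → K), φ ≠ 0 ∧
    k = (Γ.filter fun P => φ P.rep = 0).card}

/-- the minimum distance `d(Γ) = |Γ| - hyp(Γ)`. -/
def minDist {m : ℕ} (Γ : Finset (Projectivization K (Fin m → K))) : ℕ :=
  Γ.card - hyp Γ

/-- `Γ` is non-degenerate: it is not contained in any hyperplane. -/
def Nondeg {m : ℕ} (Γ : Finset (Projectivization K (Fin m → K))) : Prop :=
  ∀ φ : Module.Dual K (Fin m → K), (∀ P ∈ Γ, φ P.rep = 0) → φ = 0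

/-- The higher minimum distance `d(Γ)ₐ = |Γ| - max{|Γ'| : Γ' ⊆ Γ, dim I(Γ')ₐ > dim I(Γ)ₐ}`. -/
def higherD {m : ℕ} (Γ : Finset (Projectivization K (Fin m → K))) (a : ℕ) : ℕ :=
  Γ.card - sSup {k | ∃ Γ' ⊆ Γ,
    hdim (vanishingIdeal (Γ' : Set (Projectivization K (Fin m → K)))) a >
      hdim (vanishingIdeal (Γ : Set (Projectivization K (Fin m → K)))) a ∧ k = Γ'.card}

open Classical in
/-- The degree `δ(P)` of a point `P` in `Γ`: the least degree in which the ideal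
of `Γ \ {P}` is strictly bigger than the ideal of `Γ`. -/
def pointDegree {m : ℕ} (Γ : Finset (Projectivization K (Fin m → K)))
    (P : Projectivization K (Fin m → K)) : ℕ :=
  sInf {d | hdim (vanishingIdeal ((Γ.erase P) : Set (Projectivization K (Fin m → K)))) d >
    hdim (vanishingIdeal (Γ : Set (Projectivization K (Fin m → K)))) d}

/-- A graded minimal free resolution
`0 → F_len → ⋯ → F_1 → R → R/I → 0` of `R/I`, `R = K[x_0,…,x_{N-1}]`.
`F_j = ⊕_{i : Fin (rk j)} R(-(twist j i))` for `1 ≤ j ≤ len`.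
The differential `F_1 → R` is given by `gen` (so that its image is `I`) and the
differential `F_{j+2} → F_{j+1}` is given (in matrix form, rows indexed by the
target) by `mat j`.  All entries are homogeneous of the appropriate degrees, and
minimality means all entries lie in the irrelevant maximal ideal
(zero constant coefficient). -/
structure MinFreeRes (N : ℕ) (K : Type) [Field K] (I : Ideal (MvPolynomial (Fin N) K)) where
  len : ℕ
  rk : ℕ → ℕ
  twist : (j : ℕ) → Fin (rk j) → ℕ
  gen : Fin (rk 1) → MvPolynomial (Fin N) K
  mat : (j : ℕ) → Matrix (Fin (rk (j + 1))) (Fin (rk (j + 2))) (MvPolynomial (Fin N) K)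
  rk_len_pos : 0 < rk len
  rk_eq_zero : ∀ j, len < j → rk j = 0
  gen_hom : ∀ i, (gen i).IsHomogeneous (twist 1 i)
  gen_min : ∀ i, constantCoeff (gen i) = 0
  gen_span : Ideal.span (Set.range gen) = I
  mat_hom : ∀ j i i', mat j i i' = 0 ∨
    ∃ d, (mat j i i').IsHomogeneous d ∧ d + twist (j + 1) i = twist (j + 2) i'
  mat_min : ∀ j i i', constantCoeff (mat j i i') = 0
  exact_one : ∀ v : Fin (rk 1) → MvPolynomial (Fin N) K,
    (∑ i, v i * gen i = 0) ↔ v ∈ LinearMap.range (mat 0).mulVecLin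
  exact_rest : ∀ j, LinearMap.ker (mat j).mulVecLin = LinearMap.range (mat (j + 1)).mulVecLin

/-- `a(Γ)`: the minimal twist `min_i {a_i}` occurring in the last module
`F_len = ⊕ R(-a_i)` of the minimal free resolution. -/
def MinFreeRes.aMin {N : ℕ} {K : Type} [Field K] {I : Ideal (MvPolynomial (Fin N) K)}
    (res : MinFreeRes N K I) : ℕ :=
  Finset.univ.inf'
    (Finset.univ_nonempty_iff.mpr (Fin.pos_iff_nonempty.mp res.rk_len_pos))
    (fun i => res.twist res.len i)

/-- The minimum socle degree `A_n = min_i {a_i - n}` (here `n = len`, the length of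
the resolution). -/
def MinFreeRes.A {N : ℕ} {K : Type} [Field K] {I : Ideal (MvPolynomial (Fin N) K)}
    (res : MinFreeRes N K I) : ℤ :=
  (res.aMin : ℤ) - res.len

/-! If `Γ' ⊆ Γ` has `I(Γ')ₐ ⊋ I(Γ)ₐ`, witnessed by a form `f` of degree `a` vanishing on `Γ'` but
not at some `Q ∈ Γ`, then `f ℓ` witnesses `I(Γ')ₐ₊₁ ⊋ I(Γ)ₐ₊₁` for every linear form `ℓ` with
`ℓ(Q) ≠ 0`. If moreover two points of `Γ` lie outside `Γ'`, one of them, `P`, differs from `Q`,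
and taking `ℓ` through `P` shows that `Γ' ∪ {P}` works in degree `a + 1`. So `hyp(v_a(Γ))` is
monotone in `a` and strictly increasing while `d(Γ)_a ≥ 2`, that is, `d(Γ)_a ≥ d(Γ)_{a+1} + 1`
whenever `d(Γ)_{a+1} ≥ 2`; descending from `b` gives the bound. -/

variable {m : ℕ}

lemma mem_vanishingIdeal {Γ : Set (Projectivization K (Fin m → K))}
    {f : MvPolynomial (Fin m) K} :
    f ∈ vanishingIdeal Γ ↔ ∀ P ∈ Γ, ∀ (v : Fin m → K) (hv : v ≠ 0),
      Projectivization.mk K v hv = P → eval v f = 0 :=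
  Iff.rfl

lemma vanishingIdeal_anti {Γ₁ Γ₂ : Set (Projectivization K (Fin m → K))} (h : Γ₁ ⊆ Γ₂) :
    vanishingIdeal Γ₂ ≤ vanishingIdeal Γ₁ :=
  fun _ hf P hP => hf P (h hP)

lemma mem_degPart {I : Ideal (MvPolynomial (Fin m) K)} {d : ℕ} {f : MvPolynomial (Fin m) K} :
    f ∈ degPart I d ↔ f ∈ I ∧ f.IsHomogeneous d := by
  simp [degPart, Submodule.mem_inf, mem_homogeneousSubmodule]

lemma degPart_mono {I J : Ideal (MvPolynomial (Fin m) K)} (h : I ≤ J) (d : ℕ) :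
    degPart I d ≤ degPart J d :=
  inf_le_inf_right _ fun _ hf => h hf

instance (d : ℕ) : FiniteDimensional K (homogeneousSubmodule (Fin m) K d) :=
  Module.Finite.iff_fg.mpr (homogeneousSubmodule_fg _ _ d)

instance (I : Ideal (MvPolynomial (Fin m) K)) (d : ℕ) : FiniteDimensional K (degPart I d) :=
  Submodule.finiteDimensional_of_le inf_le_right

lemma hdim_lt_hdim_of_mem {I J : Ideal (MvPolynomial (Fin m) K)} (hIJ : I ≤ J) {d : ℕ}
    {f : MvPolynomial (Fin m) K} (hfJ : f ∈ J) (hf : f.IsHomogeneous d) (hfI : f ∉ I) :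
    hdim I d < hdim J d :=
  Submodule.finrank_lt_finrank_of_lt <| lt_of_le_of_ne (degPart_mono hIJ d) fun h =>
    hfI (mem_degPart.mp (h ▸ mem_degPart.mpr ⟨hfJ, hf⟩)).1

lemma exists_mem_notMem_of_hdim_lt {I J : Ideal (MvPolynomial (Fin m) K)} {d : ℕ}
    (h : hdim I d < hdim J d) : ∃ f ∈ J, f.IsHomogeneous d ∧ f ∉ I := by
  by_contra! hc
  refine (Submodule.finrank_mono fun f hf => ?_).not_gt h
  obtain ⟨hfJ, hf⟩ := mem_degPart.mp hf
  exact mem_degPart.mpr ⟨hc f hfJ hf, hf⟩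

def linForm (φ : Module.Dual K (Fin m → K)) : MvPolynomial (Fin m) K :=
  ∑ i, C (φ (Pi.single i 1)) * X i

lemma isHomogeneous_linForm (φ : Module.Dual K (Fin m → K)) : (linForm φ).IsHomogeneous 1 :=
  IsHomogeneous.sum _ _ _ fun i _ => by
    simpa using (isHomogeneous_C (Fin m) (φ (Pi.single i 1))).mul (isHomogeneous_X K i)

lemma eval_linForm (φ : Module.Dual K (Fin m → K)) (v : Fin m → K) :
    eval v (linForm φ) = φ v := by
  rw [LinearMap.pi_apply_eq_sum_univ φ v]
  simp only [linForm, map_sum, map_mul, eval_C, eval_X, smul_eq_mul, mul_comm]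
  congr! with i - j
  simp [Pi.single_apply, eq_comm]

lemma dual_apply_eq_zero_of_mk_eq {P : Projectivization K (Fin m → K)}
    {φ : Module.Dual K (Fin m → K)} (hP : φ P.rep = 0) {v : Fin m → K} {hv : v ≠ 0}
    (he : Projectivization.mk K v hv = P) : φ v = 0 := by
  rw [← Projectivization.mk_rep P, Projectivization.mk_eq_mk_iff'] at he
  obtain ⟨c, rfl⟩ := he
  rw [map_smul, hP, smul_zero]

lemma exists_dual_apply_rep_eq_zero_apply_ne_zero {P : Projectivization K (Fin m → K)}
    {v : Fin m → K} {hv : v ≠ 0} (hne : Projectivization.mk K v hv ≠ P) :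
    ∃ φ : Module.Dual K (Fin m → K), φ P.rep = 0 ∧ φ v ≠ 0 := by
  have hvP : v ∉ Submodule.span K {P.rep} := fun hmem => by
    obtain ⟨c, rfl⟩ := Submodule.mem_span_singleton.mp hmem
    exact hne (((Projectivization.mk_eq_mk_iff' K _ _ hv P.rep_nonzero).mpr ⟨c, rfl⟩).trans
      P.mk_rep)
  obtain ⟨φ, hφv, hφP⟩ := Submodule.exists_dual_map_eq_bot_of_notMem hvP inferInstance
  refine ⟨φ, ?_, hφv⟩
  simpa [Submodule.map_span, Submodule.span_singleton_eq_bot] using hφP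

lemma hdim_succ_lt_of_mul_linForm {Γ Δ : Set (Projectivization K (Fin m → K))} (hΔ : Δ ⊆ Γ)
    {a : ℕ} {f : MvPolynomial (Fin m) K} (hf : f.IsHomogeneous a)
    {Q : Projectivization K (Fin m → K)} (hQ : Q ∈ Γ) {v : Fin m → K} (hv : v ≠ 0)
    (hvQ : Projectivization.mk K v hv = Q) (hfv : eval v f ≠ 0)
    {φ : Module.Dual K (Fin m → K)} (hφv : φ v ≠ 0) (hmem : f * linForm φ ∈ vanishingIdeal Δ) :
    hdim (vanishingIdeal Γ) (a + 1) < hdim (vanishingIdeal Δ) (a + 1) :=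
  hdim_lt_hdim_of_mem (vanishingIdeal_anti hΔ) hmem (hf.mul (isHomogeneous_linForm φ))
    fun h => by
      have hfφv := h Q hQ v hv hvQ
      rw [map_mul, eval_linForm] at hfφv
      exact mul_ne_zero hfv hφv hfφv

lemma hdim_vanishingIdeal_succ_lt {Γ Γ' : Set (Projectivization K (Fin m → K))} (hsub : Γ' ⊆ Γ)
    {a : ℕ} (h : hdim (vanishingIdeal Γ) a < hdim (vanishingIdeal Γ') a) :
    hdim (vanishingIdeal Γ) (a + 1) < hdim (vanishingIdeal Γ') (a + 1) := by
  obtain ⟨f, hfΓ', hf, hfΓ⟩ := exists_mem_notMem_of_hdim_lt h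
  simp only [mem_vanishingIdeal, not_forall] at hfΓ
  obtain ⟨Q, hQ, v, hv, hvQ, hfv⟩ := hfΓ
  obtain ⟨i, hi⟩ := Function.ne_iff.mp hv
  exact hdim_succ_lt_of_mul_linForm hsub hf hQ hv hvQ hfv (φ := LinearMap.proj i) hi
    (Ideal.mul_mem_right _ _ hfΓ')

lemma exists_hdim_vanishingIdeal_insert_succ_lt [DecidableEq (Projectivization K (Fin m → K))]
    {Γ Γ' : Finset (Projectivization K (Fin m → K))} (hsub : Γ' ⊆ Γ)
    (hcard : Γ'.card + 2 ≤ Γ.card)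
    {a : ℕ} (h : hdim (vanishingIdeal (Γ : Set (Projectivization K (Fin m → K)))) a <
      hdim (vanishingIdeal (Γ' : Set (Projectivization K (Fin m → K)))) a) :
    ∃ P ∈ Γ, P ∉ Γ' ∧ hdim (vanishingIdeal (Γ : Set (Projectivization K (Fin m → K)))) (a + 1) <
      hdim (vanishingIdeal ((insert P Γ' : Finset _) : Set (Projectivization K (Fin m → K))))
        (a + 1) := by
  obtain ⟨f, hfΓ', hf, hfΓ⟩ := exists_mem_notMem_of_hdim_lt h
  simp only [mem_vanishingIdeal, not_forall] at hfΓ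
  obtain ⟨Q, hQ, v, hv, hvQ, hfv⟩ := hfΓ
  have hQΓ' : Q ∉ Γ' := fun hQ' => hfv (hfΓ' Q hQ' v hv hvQ)
  have h2 : 1 < (Γ \ Γ').card := by
    rw [Finset.card_sdiff_of_subset hsub]
    omega
  obtain ⟨P, hP, hPQ⟩ := Finset.exists_mem_ne h2 Q
  obtain ⟨hPΓ, hPΓ'⟩ := Finset.mem_sdiff.mp hP
  obtain ⟨φ, hφP, hφv⟩ := exists_dual_apply_rep_eq_zero_apply_ne_zero (hvQ.trans_ne hPQ.symm)
  refine ⟨P, hPΓ, hPΓ', hdim_succ_lt_of_mul_linForm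
    (Finset.coe_subset.mpr (Finset.insert_subset hPΓ hsub)) hf hQ hv hvQ hfv hφv ?_⟩
  intro R hR w hw hwR
  rw [Finset.coe_insert, Set.mem_insert_iff] at hR
  rcases hR with rfl | hR
  · rw [map_mul, eval_linForm, dual_apply_eq_zero_of_mk_eq hφP hwR, mul_zero]
  · rw [map_mul, hfΓ' R hR w hw hwR, zero_mul]

lemma hdim_vanishingIdeal_lt_empty {Γ : Set (Projectivization K (Fin m → K))} (hΓ : Γ.Nonempty)
    (a : ℕ) :
    hdim (vanishingIdeal Γ) a <
      hdim (vanishingIdeal (∅ : Set (Projectivization K (Fin m → K)))) a := by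
  obtain ⟨P, hP⟩ := hΓ
  obtain ⟨i, hi⟩ := Function.ne_iff.mp P.rep_nonzero
  refine hdim_lt_hdim_of_mem (vanishingIdeal_anti (Set.empty_subset Γ)) (f := X i ^ a)
    (fun _ h => h.elim) (by simpa using (isHomogeneous_X K i).pow a)
    fun h => hi (eq_zero_of_pow_eq_zero (n := a) ?_)
  simpa using h P hP P.rep P.rep_nonzero P.mk_rep

/-- `sSup (hypSizes Γ a)` is `hyp(v_a(Γ))`. -/
def hypSizes (Γ : Finset (Projectivization K (Fin m → K))) (a : ℕ) : Set ℕ :=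
  {k | ∃ Γ' ⊆ Γ,
    hdim (vanishingIdeal (Γ' : Set (Projectivization K (Fin m → K)))) a >
      hdim (vanishingIdeal (Γ : Set (Projectivization K (Fin m → K)))) a ∧ k = Γ'.card}

lemma higherD_eq (Γ : Finset (Projectivization K (Fin m → K))) (a : ℕ) :
    higherD Γ a = Γ.card - sSup (hypSizes Γ a) :=
  rfl

lemma bddAbove_hypSizes (Γ : Finset (Projectivization K (Fin m → K))) (a : ℕ) :
    BddAbove (hypSizes Γ a) :=
  ⟨Γ.card, by rintro k ⟨Γ', hsub, -, rfl⟩; exact Finset.card_le_card hsub⟩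

lemma zero_mem_hypSizes {Γ : Finset (Projectivization K (Fin m → K))} (hΓ : Γ.Nonempty)
    (a : ℕ) : 0 ∈ hypSizes Γ a :=
  ⟨∅, Finset.empty_subset Γ, by simpa using hdim_vanishingIdeal_lt_empty (by simpa using hΓ) a,
    rfl⟩

lemma hypSizes_subset_succ (Γ : Finset (Projectivization K (Fin m → K))) (a : ℕ) :
    hypSizes Γ a ⊆ hypSizes Γ (a + 1) := by
  rintro k ⟨Γ', hsub, h, rfl⟩
  exact ⟨Γ', hsub, hdim_vanishingIdeal_succ_lt (by simpa using hsub) h, rfl⟩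

lemma sSup_hypSizes_mono (Γ : Finset (Projectivization K (Fin m → K))) (a : ℕ) :
    sSup (hypSizes Γ a) ≤ sSup (hypSizes Γ (a + 1)) :=
  csSup_le_csSup' (bddAbove_hypSizes Γ _) (hypSizes_subset_succ Γ a)

lemma sSup_hypSizes_lt_succ {Γ : Finset (Projectivization K (Fin m → K))} {a : ℕ}
    (h : sSup (hypSizes Γ a) + 2 ≤ Γ.card) :
    sSup (hypSizes Γ a) < sSup (hypSizes Γ (a + 1)) := by
  classical
  have hΓ : Γ.Nonempty := Finset.card_pos.mp (by omega)
  obtain ⟨Γ', hsub, hlt, hcard⟩ :=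
    Nat.sSup_mem ⟨0, zero_mem_hypSizes hΓ a⟩ (bddAbove_hypSizes Γ a)
  obtain ⟨P, hPΓ, hPΓ', hP⟩ := exists_hdim_vanishingIdeal_insert_succ_lt hsub (hcard ▸ h) hlt
  have hmem : Γ'.card + 1 ∈ hypSizes Γ (a + 1) :=
    ⟨insert P Γ', Finset.insert_subset hPΓ hsub, hP, (Finset.card_insert_of_notMem hPΓ').symm⟩
  exact hcard ▸ le_csSup (bddAbove_hypSizes Γ _) hmem

lemma higherD_add_le_of_two_le {Γ : Finset (Projectivization K (Fin m → K))} {a : ℕ} :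
    ∀ {k : ℕ}, 2 ≤ higherD Γ (a + k) → higherD Γ (a + k) + k ≤ higherD Γ a
  | 0, _ => le_rfl
  | k + 1, h => by
    rw [show a + (k + 1) = a + k + 1 from rfl] at h ⊢
    simp only [higherD_eq] at h ⊢
    have hmono := sSup_hypSizes_mono Γ (a + k)
    have hlt := sSup_hypSizes_lt_succ (Γ := Γ) (a := a + k) (by omega)
    have hk := higherD_add_le_of_two_le (Γ := Γ) (a := a) (k := k) (by rw [higherD_eq]; omega)
    simp only [higherD_eq] at hk
    omega

theorem higherD_ge_of_two_le_general
    {K : Type} [Field K] {n : ℕ}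
    (Γ : Finset (Projectivization K (Fin (n + 1) → K)))
    {b : ℕ} (hd : 2 ≤ higherD Γ b) :
    ∀ a, 1 ≤ a → a ≤ b → b - a + 2 ≤ higherD Γ a := by
  intro a _ hab
  obtain ⟨k, rfl⟩ := Nat.exists_eq_add_of_le hab
  have := higherD_add_le_of_two_le hd
  omega

/-- If `d(Γ)_b ≥ 2` for some `b ≥ 1`, then
`d(Γ)_a ≥ b - a + 2` for all `1 ≤ a ≤ b`. -/
theorem higherD_ge_of_two_le
    {K : Type} [Field K] [CharZero K] {n : ℕ}
    (Γ : Finset (Projectivization K (Fin (n + 1) → K)))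
    (hnd : Nondeg Γ)
    {b : ℕ} (hb : 1 ≤ b) (hd : 2 ≤ higherD Γ b) :
    ∀ a, 1 ≤ a → a ≤ b → b - a + 2 ≤ higherD Γ a :=
  higherD_ge_of_two_le_general Γ hd

end PointsMinDist
end
end

section
/- Let Γ ⊂ P^n_K (n ≥ 2) be a reduced set of m points consisting of m−1 points lying in a single hyperplane together with one point outside that hyperplane, where the m−1 points do not all lie in a codimension-2 linear subspace (so Γ is non-degenerate). Then d(Γ) = 1, a(Γ) = n + 1, and hence d(Γ) = A_n. -/
open MvPolynomial

noncomputable section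

namespace PointsMinDist

variable {K : Type} [Field K]

/-!
The hyperplane `φ = 0` contains all of `Γ` but `P₀`, and `Γ` spans `ℙⁿ`, so `d(Γ) = 1`. Since `Γ`
spans, `I(Γ)` has no linear forms, and minimality of the resolution then forces every twist of
`F_p` to be at least `p + 1`. On the other hand `I(Γ)` contains `φ · I(P₀)`, and `I(P₀)` is
generated by the Koszul boundaries `v_b x_a - v_a x_b` of `v = P₀`. Lifting the Koszul complex
along the resolution and keeping only degree-zero parts produces, in each homological degree
`p ≤ n`, a nonzero scalar cycle living on generators of twist `p + 1`. Hence `F_n` has a summand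
`R(-(n+1))` and `a(Γ) = n + 1`.
-/

section Polynomial

open MvPolynomial Matrix

variable {σ R : Type*} [CommSemiring R]

lemma _root_.MvPolynomial.IsHomogeneous.eq_zero_of_constantCoeff
    {f : MvPolynomial σ R} (hf : f.IsHomogeneous 0) (h : constantCoeff f = 0) : f = 0 := by
  rw [← homogeneousComponent_eq_self hf, homogeneousComponent_zero, ← constantCoeff_eq, h, map_zero]

lemma constantCoeff_mulVec_eq_zero {m n : Type*} [Fintype n] {M : Matrix m n (MvPolynomial σ R)}
    (hM : ∀ i j, constantCoeff (M i j) = 0) (w : n → MvPolynomial σ R) (i : m) :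
    constantCoeff ((M *ᵥ w) i) = 0 := by
  simp [Matrix.mulVec, dotProduct, hM]

lemma homogeneousComponent_mul_of_isHomogeneous {g : MvPolynomial σ R} {d : ℕ}
    (hg : g.IsHomogeneous d) (w : MvPolynomial σ R) (m : ℕ) :
    homogeneousComponent m (g * w) = if d ≤ m then g * homogeneousComponent (m - d) w else 0 := by
  classical
  let _ : GradedAlgebra (homogeneousSubmodule σ R) := gradedAlgebra
  have hdec (p : MvPolynomial σ R) (i : ℕ) :
      (DirectSum.decompose (homogeneousSubmodule σ R) p i : MvPolynomial σ R) =
        homogeneousComponent i p :=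
    decomposition.decompose'_apply p i
  have := DirectSum.coe_decompose_mul_of_left_mem (homogeneousSubmodule σ R) (b := w) m
    ((mem_homogeneousSubmodule d g).mpr hg)
  rwa [hdec, hdec] at this

/-- Compare the parts of degree `D - τ`: an entry `gᵢ` of degree `tᵢ - τ > D - τ` contributes
nothing, and one of degree exactly `D - τ` meets only the constant term of `wᵢ`. -/
lemma sum_mul_C_coeff_zero_eq {ι : Type*} [Fintype ι] {g w : ι → MvPolynomial σ R}
    {t : ι → ℕ} {τ D : ℕ} (hg : ∀ i, g i = 0 ∨ ∃ d, (g i).IsHomogeneous d ∧ d + τ = t i)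
    (ht : ∀ i, D ≤ t i) {b : MvPolynomial σ R}
    (hb : b = 0 ∨ ∃ e, b.IsHomogeneous e ∧ e + τ = D) (hw : ∑ i, g i * w i = b) :
    ∑ i, g i * C (if t i = D then coeff 0 (w i) else 0) = b := by
  by_cases hτ : τ ≤ D
  · have hbD : homogeneousComponent (D - τ) b = b := by
      rcases hb with rfl | ⟨e, he, rfl⟩
      · exact map_zero _
      · simpa using homogeneousComponent_eq_self he
    rw [← hbD, ← hw, map_sum]
    refine Finset.sum_congr rfl fun i _ => ?_
    rcases hg i with h0 | ⟨d, hd, hdt⟩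
    · simp [h0]
    · rw [homogeneousComponent_mul_of_isHomogeneous hd]
      have := ht i
      by_cases hi : t i = D
      · rw [if_pos hi, if_pos (by omega), show D - τ - d = 0 by omega, homogeneousComponent_zero]
      · rw [if_neg hi, if_neg (by omega), map_zero, mul_zero]
  · have hb0 : b = 0 := hb.resolve_right fun ⟨e, _, he⟩ => hτ (by omega)
    rw [hb0]
    refine Finset.sum_eq_zero fun i _ => ?_
    rcases hg i with h0 | ⟨d, -, hdt⟩
    · rw [h0, zero_mul]
    · rw [if_neg (by omega), map_zero, mul_zero]

/-- `M` is a graded map `⊕ᵢ R(-tᵢ) → ⊕ᵣ R(-τᵣ)` with all `tᵢ ≥ D`; any family of elements of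
internal degree `D` in its image has a lift with scalar coordinates. -/
lemma exists_scalar_lift {ρ ι : Type*} [Fintype ι]
    {M : ρ → ι → MvPolynomial σ R} {τ : ρ → ℕ} {t : ι → ℕ} {D : ℕ}
    (hM : ∀ r i, M r i = 0 ∨ ∃ d, (M r i).IsHomogeneous d ∧ d + τ r = t i) (ht : ∀ i, D ≤ t i)
    {p : Finset σ → Prop} {b : Finset σ → ρ → MvPolynomial σ R}
    (hb : ∀ T, p T → ∀ r, b T r = 0 ∨ ∃ e, (b T r).IsHomogeneous e ∧ e + τ r = D)
    (hlift : ∀ T, p T → ∃ w : ι → MvPolynomial σ R, ∀ r, ∑ i, M r i * w i = b T r) :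
    ∃ γ : ι → Finset σ → R, (∀ i S, γ i S ≠ 0 → t i = D ∧ p S) ∧
      ∀ T, p T → ∀ r, ∑ i, M r i * C (γ i T) = b T r := by
  classical
  choose! w hw using hlift
  refine ⟨fun i S => if p S ∧ t i = D then coeff 0 (w S i) else 0, fun i S h => ?_,
    fun T hT r => ?_⟩
  · by_contra hn
    exact h (if_neg (by tauto))
  · convert sum_mul_C_coeff_zero_eq (hM r) ht (hb T hT r) (hw T hT r) using 4 with i
    simp [hT]

end Polynomial

namespace Koszul

open Finset MvPolynomial

variable {R : Type*} [CommRing R] {N : ℕ}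

def sign (k : Fin N) (T : Finset (Fin N)) : R :=
  (-1) ^ #{t ∈ T | t < k}

lemma sign_mul_sign_insert {k l : Fin N} {T : Finset (Fin N)} (hk : k ∉ T) (hl : l ∉ T)
    (hkl : k ≠ l) :
    (sign k T * sign l (insert k T) : R) = -(sign l T * sign k (insert l T)) := by
  have hcard : ∀ {a b : Fin N}, a ∉ T →
      #{t ∈ insert a T | t < b} = #{t ∈ T | t < b} + if a < b then 1 else 0 := by
    intro a b ha
    rw [filter_insert]
    split_ifs <;> simp [card_insert_of_notMem, ha]
  simp only [sign, hcard hk, hcard hl]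
  rcases hkl.lt_or_gt with h | h <;> simp [h, h.not_gt, pow_add, mul_comm]

/-- The antisymmetry of the signs makes symmetric terms cancel in pairs. -/
lemma sum_sum_sign_mul_eq_zero (T : Finset (Fin N)) (f : Fin N → Fin N → R)
    (hf : ∀ k l, f k l = f l k) :
    ∑ k ∈ Tᶜ, ∑ l ∈ (insert k T)ᶜ, sign k T * sign l (insert k T) * f k l = 0 := by
  simp only [compl_insert]
  rw [sum_sigma']
  refine sum_involution (fun p _ => ⟨p.2, p.1⟩) ?_ ?_ ?_ ?_
  · rintro ⟨k, l⟩ hp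
    simp only [mem_sigma, mem_erase, mem_compl] at hp
    rw [hf l k, sign_mul_sign_insert hp.1 hp.2.2 (Ne.symm hp.2.1)]
    ring
  · rintro ⟨k, l⟩ hp - h
    simp only [mem_sigma, mem_erase] at hp
    exact hp.2.1 (congrArg Sigma.fst h)
  · rintro ⟨k, l⟩ hp
    simp only [mem_sigma, mem_erase] at hp ⊢
    exact ⟨hp.2.2, Ne.symm hp.2.1, hp.1⟩
  · intro p _
    rfl

lemma isUnit_sign (k : Fin N) (T : Finset (Fin N)) : IsUnit (sign k T : R) :=
  isUnit_neg_one.pow _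

lemma C_sign (k : Fin N) (T : Finset (Fin N)) :
    (C (sign k T : R) : MvPolynomial (Fin N) R) = sign k T := by
  simp [sign]

variable (R N) in
/-- A family `c` indexed by subsets stands for `∑ c S • e_S` in the exterior algebra on
`R[x]^N`; `diff` is the Koszul differential of `x₀, …, x_{N-1}` in these coordinates. -/
def diff : (Finset (Fin N) → MvPolynomial (Fin N) R) →ₗ[MvPolynomial (Fin N) R]
    (Finset (Fin N) → MvPolynomial (Fin N) R) :=
  LinearMap.pi fun T => ∑ k ∈ Tᶜ, (C (sign k T : R) * X k : MvPolynomial (Fin N) R) •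
    LinearMap.proj (φ := fun _ => MvPolynomial (Fin N) R) (insert k T)

lemma diff_apply (c : Finset (Fin N) → MvPolynomial (Fin N) R) (T : Finset (Fin N)) :
    diff R N c T = ∑ k ∈ Tᶜ, C (sign k T) * X k * c (insert k T) := by
  simp [diff]

lemma diff_congr {c₁ c₂ : Finset (Fin N) → MvPolynomial (Fin N) R} {T : Finset (Fin N)}
    (h : ∀ k ∉ T, c₁ (insert k T) = c₂ (insert k T)) : diff R N c₁ T = diff R N c₂ T := by
  simp only [diff_apply]
  exact sum_congr rfl fun k hk => by rw [h k (mem_compl.mp hk)]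

lemma diff_diff (c : Finset (Fin N) → MvPolynomial (Fin N) R) : diff R N (diff R N c) = 0 := by
  funext T
  simp only [diff_apply, mul_sum, Pi.zero_apply]
  convert sum_sum_sign_mul_eq_zero T (fun k l => X k * X l * c (insert l (insert k T)))
    (fun k l => by rw [insert_comm]; ring) using 3 with k - l -
  simp only [C_sign]
  ring

lemma isHomogeneous_diff {c : Finset (Fin N) → MvPolynomial (Fin N) R} {T : Finset (Fin N)}
    {d : ℕ} (hc : ∀ k ∉ T, (c (insert k T)).IsHomogeneous d) :
    (diff R N c T).IsHomogeneous (d + 1) := by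
  rw [diff_apply]
  refine IsHomogeneous.sum _ _ _ fun k hk => ?_
  simpa [add_comm] using ((isHomogeneous_C _ _).mul (isHomogeneous_X R k)).mul
    (hc k (mem_compl.mp hk))

lemma diff_C_eq_zero_iff {α : Finset (Fin N) → R} {T : Finset (Fin N)} :
    diff R N (fun S => C (α S)) T = 0 ↔ ∀ k ∉ T, α (insert k T) = 0 := by
  constructor
  · intro h k hk
    have := congrArg (coeff (Finsupp.single k 1)) h
    have hterm : ∀ x, coeff (Finsupp.single k 1) (C (sign x T) * X x * C (α (insert x T))) =
        if x = k then sign x T * α (insert x T) else 0 := by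
      intro x
      rw [mul_right_comm, ← C_mul, coeff_C_mul, coeff_X]
      simp [Finsupp.single_left_inj one_ne_zero]
    simp only [diff_apply, coeff_sum, coeff_zero, hterm, sum_ite_eq', mem_compl, if_pos hk] at this
    exact (isUnit_sign k T).mul_right_eq_zero.mp this
  · intro h
    rw [diff_apply]
    exact sum_eq_zero fun k hk => by rw [h k (mem_compl.mp hk), map_zero, mul_zero]

lemma sum_mul_diff_eq_zero {ι : Type*} [Fintype ι] (A : ι → MvPolynomial (Fin N) R)
    (c : ι → Finset (Fin N) → MvPolynomial (Fin N) R) (c' : Finset (Fin N) → MvPolynomial (Fin N) R)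
    {T : Finset (Fin N)} (h : ∀ k ∉ T, ∑ i, A i * c i (insert k T) = diff R N c' (insert k T)) :
    ∑ i, A i * diff R N (c i) T = 0 := by
  have hlin : ∑ i, A i * diff R N (c i) T = diff R N (∑ i, A i • c i) T := by
    simp [map_sum, Finset.sum_apply]
  rw [hlin, diff_congr (c₂ := diff R N c') fun k hk => by simpa [Finset.sum_apply] using h k hk,
    diff_diff, Pi.zero_apply]

/-- At `Tᶜ = {a, b}` the Koszul boundary of `contract v` is `±(v_b x_a - v_a x_b)`: these
quadrics generate the ideal of the point `v`. -/
def contract (v : Fin N → R) (S : Finset (Fin N)) : R :=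
  ∑ j ∈ Sᶜ, sign j S * v j

lemma eval_diff_contract (v : Fin N → R) (a : R) (T : Finset (Fin N)) :
    eval (a • v) (diff R N (fun S => C (contract v S)) T) = 0 := by
  simp only [diff_apply, contract, map_sum, eval_mul, eval_C, eval_X, mul_sum]
  convert sum_sum_sign_mul_eq_zero T (fun k l => a * v k * v l) (fun k l => by ring)
    using 3 with k - l -
  simp only [Pi.smul_apply, smul_eq_mul]
  ring

lemma exists_diff_contract_ne_zero (hN : 2 ≤ N) {v : Fin N → R} (hv : v ≠ 0) :
    ∃ T : Finset (Fin N), #T + 2 = N ∧ diff R N (fun S => C (contract v S)) T ≠ 0 := by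
  obtain ⟨j, hj⟩ := Function.ne_iff.mp hv
  have : Nontrivial (Fin N) := Fin.nontrivial_iff_two_le.mpr hN
  obtain ⟨k, hk⟩ := exists_ne j
  have hkj : k ∈ ({j}ᶜ : Finset (Fin N)) := by simpa using hk
  refine ⟨({j}ᶜ : Finset (Fin N)).erase k, ?_, ?_⟩
  · rw [card_erase_of_mem hkj, card_compl, card_singleton, Fintype.card_fin]
    omega
  · rw [Ne, diff_C_eq_zero_iff]
    push Not
    refine ⟨k, notMem_erase k _, ?_⟩
    rw [insert_erase hkj, contract, compl_compl, sum_singleton]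
    exact (isUnit_sign j _).mul_right_eq_zero.not.mpr hj

end Koszul

namespace MinFreeRes

open MvPolynomial Matrix Finset Koszul

variable {N : ℕ} {I : Ideal (MvPolynomial (Fin N) K)} (res : MinFreeRes N K I)

lemma gen_ne_zero (i : Fin (res.rk 1)) : res.gen i ≠ 0 := by
  classical
  intro h
  obtain ⟨w, hw⟩ := (res.exact_one (Pi.single i 1)).mp (by simp [Pi.single_apply, h])
  have := constantCoeff_mulVec_eq_zero (res.mat_min 0) w i
  simp only [Matrix.mulVecLin_apply] at hw
  simp [hw] at this

lemma exists_mat_ne_zero (j : ℕ) (i' : Fin (res.rk (j + 2))) : ∃ i, res.mat j i i' ≠ 0 := by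
  classical
  by_contra! hcol
  have hker : Pi.single i' 1 ∈ LinearMap.ker (res.mat j).mulVecLin := by
    ext i
    simp [Matrix.mulVec_single, hcol i]
  obtain ⟨w, hw⟩ := res.exact_rest j ▸ hker
  have := constantCoeff_mulVec_eq_zero (res.mat_min (j + 1)) w i'
  simp only [Matrix.mulVecLin_apply] at hw
  simp [hw] at this

lemma two_le_twist_one (hI : ∀ f ∈ I, f.IsHomogeneous 1 → f = 0) (i : Fin (res.rk 1)) :
    2 ≤ res.twist 1 i := by
  have hmem : res.gen i ∈ I := res.gen_span.le (Ideal.subset_span ⟨i, rfl⟩)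
  by_contra! hlt
  interval_cases h : res.twist 1 i
  · exact res.gen_ne_zero i ((h ▸ res.gen_hom i).eq_zero_of_constantCoeff (res.gen_min i))
  · exact res.gen_ne_zero i (hI _ hmem (h ▸ res.gen_hom i))

/-- Minimality: every column of a differential has a nonzero entry, of positive degree. -/
lemma add_two_le_twist (h1 : ∀ i, 2 ≤ res.twist 1 i) (p : ℕ) (i : Fin (res.rk (p + 1))) :
    p + 2 ≤ res.twist (p + 1) i := by
  induction p with
  | zero => exact h1 i
  | succ p ih =>
    obtain ⟨i₀, hne⟩ := res.exists_mat_ne_zero p i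
    obtain ⟨d, hd, hsum⟩ := (res.mat_hom p i₀ i).resolve_left hne
    have hd0 : d ≠ 0 := by
      rintro rfl
      exact hne (hd.eq_zero_of_constantCoeff (res.mat_min p i₀ i))
    have := ih i₀
    change _ ≤ res.twist (p + 2) i
    omega

lemma aMin_eq {n m : ℕ} (hlen : res.len = n) (hle : ∀ i : Fin (res.rk n), m ≤ res.twist n i)
    (hex : ∃ i : Fin (res.rk n), res.twist n i = m) : res.aMin = m := by
  subst hlen
  obtain ⟨i, hi⟩ := hex
  exact le_antisymm (hi ▸ Finset.inf'_le _ (Finset.mem_univ i))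
    (Finset.le_inf' _ _ fun i _ => hle i)

/-- `v` is a cycle in `F_{s+1}`: it maps to zero in `F_s` (in `R` for `s = 0`). -/
def IsCycle : (s : ℕ) → (Fin (res.rk (s + 1)) → MvPolynomial (Fin N) K) → Prop
  | 0, v => ∑ i, v i * res.gen i = 0
  | s + 1, v => res.mat s *ᵥ v = 0

lemma IsCycle.exists_mulVec_eq {s : ℕ} {v : Fin (res.rk (s + 1)) → MvPolynomial (Fin N) K}
    (hv : res.IsCycle s v) : ∃ w, res.mat s *ᵥ w = v := by
  cases s with
  | zero => exact (res.exact_one v).mp hv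
  | succ s =>
    have hker : v ∈ LinearMap.ker (res.mat s).mulVecLin := hv
    rw [res.exact_rest s] at hker
    exact hker

/-- `γ` gives the coordinates (indexed by generators and subsets) of an element of
`F_{s+1} ⊗ ⋀^{N-s-2} K^N` of internal degree `s + 2`, whose Koszul boundaries are cycles. -/
def IsStrandCycle (s : ℕ) (γ : Fin (res.rk (s + 1)) → Finset (Fin N) → K) : Prop :=
  γ ≠ 0 ∧ (∀ i S, γ i S ≠ 0 → res.twist (s + 1) i = s + 2 ∧ #S + s + 2 = N) ∧
    ∀ T : Finset (Fin N), #T + s + 3 = N →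
      res.IsCycle s fun i => diff K N (fun S => C (γ i S)) T

lemma exists_isStrandCycle_zero (hN : 2 ≤ N) (h1 : ∀ i, 2 ≤ res.twist 1 i)
    {F : MvPolynomial (Fin N) K} (hF : F.IsHomogeneous 1) (hF0 : F ≠ 0) {v : Fin N → K}
    (hv : v ≠ 0) (hI : ∀ T, F * diff K N (fun S => C (contract v S)) T ∈ I) :
    ∃ γ, res.IsStrandCycle 0 γ := by
  set κ : Finset (Fin N) → MvPolynomial (Fin N) K := fun S => C (contract v S)
  have hFκ : ∀ T, diff K N (F • κ) T = F * diff K N κ T := fun T => by rw [map_smul]; rfl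
  obtain ⟨γ, hsupp, hγ⟩ := exists_scalar_lift (ρ := Unit) (M := fun _ => res.gen)
    (τ := fun _ => 0) (fun _ i => Or.inr ⟨_, res.gen_hom i, rfl⟩) h1
    (p := fun T => #T + 2 = N) (b := fun T _ => diff K N (F • κ) T)
    (fun T _ _ => Or.inr ⟨2, isHomogeneous_diff fun k _ => by
      simpa using hF.mul (isHomogeneous_C _ (contract v (insert k T))), rfl⟩)
    (fun T hT => by
      obtain ⟨w, hw⟩ := Ideal.mem_span_range_iff_exists_fun.mp
        (res.gen_span.ge (hFκ T ▸ hI T))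
      exact ⟨w, fun _ => by simpa only [mul_comm (res.gen _)] using hw⟩)
  refine ⟨γ, ?_, fun i S h => by simpa using hsupp i S h, fun T hT => ?_⟩
  · rintro rfl
    obtain ⟨T, hT, hne⟩ := exists_diff_contract_ne_zero hN hv
    apply mul_ne_zero hF0 hne
    rw [← hFκ, ← hγ T hT ()]
    simp
  · change ∑ i, _ * res.gen i = 0
    simp only [mul_comm _ (res.gen _)]
    exact sum_mul_diff_eq_zero _ _ (F • κ) fun k hk =>
      hγ _ (by rw [card_insert_of_notMem hk]; omega) ()

lemma IsStrandCycle.exists_succ (h1 : ∀ i, 2 ≤ res.twist 1 i) {s : ℕ} (hs : s + 3 ≤ N)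
    {γ : Fin (res.rk (s + 1)) → Finset (Fin N) → K} (hγ : res.IsStrandCycle s γ) :
    ∃ γ', res.IsStrandCycle (s + 1) γ' := by
  obtain ⟨hne, hsupp, hcyc⟩ := hγ
  have hb : ∀ T r, diff K N (fun S => C (γ r S)) T = 0 ∨
      ∃ e, (diff K N (fun S => C (γ r S)) T).IsHomogeneous e ∧ e + res.twist (s + 1) r = s + 3 := by
    intro T r
    by_cases hr : res.twist (s + 1) r = s + 2
    · exact Or.inr ⟨0 + 1, isHomogeneous_diff fun k _ => isHomogeneous_C _ _, by omega⟩
    · exact Or.inl (diff_C_eq_zero_iff.mpr fun k _ => by_contra fun h => hr (hsupp r _ h).1)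
  obtain ⟨γ', hsupp', hγ'⟩ := exists_scalar_lift (M := res.mat s) (res.mat_hom s)
    (res.add_two_le_twist h1 (s + 1)) (p := fun T => #T + s + 3 = N)
    (b := fun T r => diff K N (fun S => C (γ r S)) T) (fun T _ r => hb T r)
    (fun T hT => by
      obtain ⟨w, hw⟩ := (hcyc T hT).exists_mulVec_eq
      exact ⟨w, fun r => congrFun hw r⟩)
  refine ⟨γ', ?_, fun i S h => ?_, fun T hT => ?_⟩
  · rintro rfl
    apply hne
    funext r S
    by_contra h
    obtain ⟨k, hk⟩ : S.Nonempty := card_pos.mp (by have := (hsupp r S h).2; omega)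
    have hzero : diff K N (fun S => C (γ r S)) (S.erase k) = 0 := by
      rw [← hγ' _ (by have := (hsupp r S h).2; rw [card_erase_of_mem hk]; omega) r]
      simp
    exact h (by simpa [insert_erase hk] using diff_C_eq_zero_iff.mp hzero k (notMem_erase k S))
  · exact ⟨(hsupp' i S h).1, by have := (hsupp' i S h).2; omega⟩
  · change res.mat s *ᵥ _ = 0
    funext r
    exact sum_mul_diff_eq_zero (res.mat s r) (fun i S => C (γ' i S)) (fun S => C (γ r S))
      fun k hk => hγ' _ (by rw [card_insert_of_notMem hk]; omega) r

lemma exists_isStrandCycle (hN : 2 ≤ N) (h1 : ∀ i, 2 ≤ res.twist 1 i)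
    {F : MvPolynomial (Fin N) K} (hF : F.IsHomogeneous 1) (hF0 : F ≠ 0) {v : Fin N → K}
    (hv : v ≠ 0) (hI : ∀ T, F * diff K N (fun S => C (contract v S)) T ∈ I) :
    ∀ s, s + 2 ≤ N → ∃ γ, res.IsStrandCycle s γ
  | 0, _ => res.exists_isStrandCycle_zero hN h1 hF hF0 hv hI
  | s + 1, hs =>
    have ⟨_, hγ⟩ := exists_isStrandCycle hN h1 hF hF0 hv hI s (by omega)
    hγ.exists_succ res h1 (by omega)

/-- If `I` contains `F` times the ideal of a point, the resolution has a linear strand of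
maximal length. -/
lemma exists_twist_eq_add_two (hN : 2 ≤ N) (h1 : ∀ i, 2 ≤ res.twist 1 i)
    {F : MvPolynomial (Fin N) K} (hF : F.IsHomogeneous 1) (hF0 : F ≠ 0) {v : Fin N → K}
    (hv : v ≠ 0) (hI : ∀ T, F * diff K N (fun S => C (contract v S)) T ∈ I)
    (s : ℕ) (hs : s + 2 ≤ N) :
    ∃ i : Fin (res.rk (s + 1)), res.twist (s + 1) i = s + 2 := by
  obtain ⟨γ, hne, hsupp, -⟩ := res.exists_isStrandCycle hN h1 hF hF0 hv hI s hs
  obtain ⟨i, S, h⟩ : ∃ i S, γ i S ≠ 0 := by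
    by_contra! h
    exact hne (funext fun i => funext (h i))
  exact ⟨i, (hsupp i S h).1⟩

end MinFreeRes

section Geometry

open MvPolynomial Finset

variable {m : ℕ}

def linearPoly (φ : Module.Dual K (Fin m → K)) : MvPolynomial (Fin m) K :=
  ∑ k, C (φ (Pi.single k 1)) * X k

@[simp]
lemma eval_linearPoly (φ : Module.Dual K (Fin m → K)) (v : Fin m → K) :
    eval v (linearPoly φ) = φ v := by
  conv_rhs => rw [← univ_sum_single v]
  simp only [linearPoly, map_sum, eval_mul, eval_C, eval_X]
  refine sum_congr rfl fun k _ => ?_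
  rw [mul_comm, ← smul_eq_mul, ← map_smul, ← Pi.single_smul', smul_eq_mul, mul_one]

lemma isHomogeneous_linearPoly (φ : Module.Dual K (Fin m → K)) :
    (linearPoly φ).IsHomogeneous 1 :=
  IsHomogeneous.sum _ _ _ fun k _ => isHomogeneous_C_mul_X _ k

lemma linearPoly_ne_zero {φ : Module.Dual K (Fin m → K)} (hφ : φ ≠ 0) : linearPoly φ ≠ 0 :=
  fun h => hφ (LinearMap.ext fun v => by simpa [h] using (eval_linearPoly φ v).symm)

lemma exists_eq_linearPoly {f : MvPolynomial (Fin m) K} (hf : f.IsHomogeneous 1) :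
    ∃ φ, f = linearPoly φ := by
  have hmem : f ∈ Submodule.span K (Set.range X) :=
    homogeneousSubmodule_one_eq_span_X (σ := Fin m) (R := K) ▸
      (mem_homogeneousSubmodule 1 f).mpr hf
  obtain ⟨c, rfl⟩ := (Submodule.mem_span_range_iff_exists_fun K).mp hmem
  refine ⟨∑ k, c k • LinearMap.proj k, ?_⟩
  simp [linearPoly, smul_eq_C_mul, Pi.single_apply]

lemma exists_smul_rep_of_mk_eq {v : Fin m → K} {hv : v ≠ 0} {P : Projectivization K (Fin m → K)}
    (h : Projectivization.mk K v hv = P) : ∃ a : K, v = a • P.rep := by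
  rw [← P.mk_rep, Projectivization.mk_eq_mk_iff'] at h
  obtain ⟨a, ha⟩ := h
  exact ⟨a, ha.symm⟩

lemma eval_rep_eq_zero_of_mem {Γ : Set (Projectivization K (Fin m → K))}
    {f : MvPolynomial (Fin m) K} (hf : f ∈ vanishingIdeal Γ) {P : Projectivization K (Fin m → K)} (hP : P ∈ Γ) :
    eval P.rep f = 0 :=
  hf P hP P.rep P.rep_nonzero P.mk_rep

lemma Nondeg.eq_zero_of_isHomogeneous_one {Γ : Finset (Projectivization K (Fin m → K))}
    (hΓ : Nondeg Γ)    {f : MvPolynomial (Fin m) K} (hf : f ∈ vanishingIdeal (Γ : Set _))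
    (h1 : f.IsHomogeneous 1) : f = 0 := by
  obtain ⟨φ, rfl⟩ := exists_eq_linearPoly h1
  rw [hΓ φ fun P hP => by simpa using eval_rep_eq_zero_of_mem hf (mem_coe.mpr hP)]
  simp [linearPoly]

open Classical in
lemma card_filter_le_hyp (Γ : Finset (Projectivization K (Fin m → K)))
    {φ : Module.Dual K (Fin m → K)} (hφ : φ ≠ 0) : #(Γ.filter fun P => φ P.rep = 0) ≤ hyp Γ :=
  le_csSup ⟨#Γ, by rintro _ ⟨ψ, -, rfl⟩; exact card_filter_le _ _⟩ ⟨φ, hφ, rfl⟩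

lemma Nondeg.hyp_lt_card {Γ : Finset (Projectivization K (Fin m → K))} (hΓ : Nondeg Γ)
    (hne : Γ.Nonempty) : hyp Γ < #Γ := by
  classical
  refine lt_of_le_of_lt (csSup_le' (a := #Γ - 1) ?_) (Nat.sub_lt hne.card_pos one_pos)
  rintro _ ⟨φ, hφ, rfl⟩
  have : ∃ P ∈ Γ, φ P.rep ≠ 0 := by
    by_contra! h
    exact hφ (hΓ φ h)
  have := card_lt_card (filter_ssubset.mpr this)
  omega

variable [DecidableEq (Projectivization K (Fin m → K))]
  {Γ₁ : Finset (Projectivization K (Fin m → K))} {P₀ : Projectivization K (Fin m → K)}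
  {φ : Module.Dual K (Fin m → K)}

lemma nondeg_insert (hP₀ : φ P₀.rep ≠ 0)
    (hspan : ∀ ψ : Module.Dual K (Fin m → K), (∀ P ∈ Γ₁, ψ P.rep = 0) → ∃ c : K, ψ = c • φ) :
    Nondeg (insert P₀ Γ₁) := by
  intro ψ hψ
  obtain ⟨c, rfl⟩ := hspan ψ fun P hP => hψ P (mem_insert_of_mem hP)
  have := hψ P₀ (mem_insert_self _ _)
  rw [LinearMap.smul_apply, smul_eq_mul, mul_eq_zero] at this
  rw [this.resolve_right hP₀, zero_smul]

lemma minDist_insert_eq_one (hφ : φ ≠ 0) (hΓ₁ : ∀ P ∈ Γ₁, φ P.rep = 0) (hP₀ : φ P₀.rep ≠ 0)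
    (hΓ : Nondeg (insert P₀ Γ₁)) : minDist (insert P₀ Γ₁) = 1 := by
  classical
  have hP₀Γ₁ : P₀ ∉ Γ₁ := fun h => hP₀ (hΓ₁ P₀ h)
  have hle := card_filter_le_hyp (insert P₀ Γ₁) hφ
  rw [filter_insert, if_neg hP₀, filter_true_of_mem hΓ₁] at hle
  have hlt := hΓ.hyp_lt_card (insert_nonempty P₀ Γ₁)
  rw [minDist, card_insert_of_notMem hP₀Γ₁] at *
  omega

lemma linearPoly_mul_diff_contract_mem (hΓ₁ : ∀ P ∈ Γ₁, φ P.rep = 0) (T : Finset (Fin m)) :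
    linearPoly φ * Koszul.diff K m (fun S => C (Koszul.contract P₀.rep S)) T ∈
      vanishingIdeal ((insert P₀ Γ₁ : Finset _) : Set (Projectivization K (Fin m → K))) := by
  intro P hP v hv hvP
  obtain ⟨a, rfl⟩ := exists_smul_rep_of_mk_eq hvP
  rcases mem_insert.mp (mem_coe.mp hP) with rfl | hP
  · rw [eval_mul, Koszul.eval_diff_contract, mul_zero]
  · rw [eval_mul, eval_linearPoly, map_smul, hΓ₁ P hP, smul_zero, zero_mul]

end Geometry

theorem hyperplane_points_plus_one_general
    {K : Type} [Field K] {n : ℕ} (hn : 2 ≤ n)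
    [DecidableEq (Projectivization K (Fin (n + 1) → K))]
    (Γ₁ : Finset (Projectivization K (Fin (n + 1) → K)))
    (P₀ : Projectivization K (Fin (n + 1) → K))
    (φ : Module.Dual K (Fin (n + 1) → K)) (hφ : φ ≠ 0)
    (hΓ₁ : ∀ P ∈ Γ₁, φ P.rep = 0)
    (hP₀ : φ P₀.rep ≠ 0)
    (hspan : ∀ ψ : Module.Dual K (Fin (n + 1) → K),
      (∀ P ∈ Γ₁, ψ P.rep = 0) → ∃ c : K, ψ = c • φ)
    (res : MinFreeRes (n + 1) K
      (vanishingIdeal ((insert P₀ Γ₁ : Finset (Projectivization K (Fin (n + 1) → K))) : Set (Projectivization K (Fin (n + 1) → K)))))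
    (hlen : res.len = n) :
    minDist (insert P₀ Γ₁) = 1 ∧ res.aMin = n + 1 ∧
      (minDist (insert P₀ Γ₁) : ℤ) = res.A := by
  have hΓ : Nondeg (insert P₀ Γ₁) := nondeg_insert hP₀ hspan
  have hd : minDist (insert P₀ Γ₁) = 1 := minDist_insert_eq_one hφ hΓ₁ hP₀ hΓ
  have h1 : ∀ i, 2 ≤ res.twist 1 i :=
    res.two_le_twist_one fun f hf => hΓ.eq_zero_of_isHomogeneous_one hf
  obtain ⟨s, rfl⟩ : ∃ s, n = s + 1 := ⟨n - 1, by omega⟩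
  have ha : res.aMin = s + 2 := res.aMin_eq hlen (res.add_two_le_twist h1 s)
    (res.exists_twist_eq_add_two (by omega) h1 (isHomogeneous_linearPoly φ)
      (linearPoly_ne_zero hφ) P₀.rep_nonzero
      (linearPoly_mul_diff_contract_mem hΓ₁) s (by omega))
  refine ⟨hd, ha, ?_⟩
  simp [MinFreeRes.A, hd, ha, hlen]

/-- If `Γ` consists of a set `Γ₁` of points lying on the
hyperplane `φ = 0` (and spanning it: any linear form vanishing on `Γ₁` is a
multiple of `φ`) together with one point `P₀` off that hyperplane, then
`d(Γ) = 1`, `a(Γ) = n + 1`, and `d(Γ) = A_n`. -/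
theorem hyperplane_points_plus_one
    {K : Type} [Field K] [CharZero K] {n : ℕ} (hn : 2 ≤ n)
    [DecidableEq (Projectivization K (Fin (n + 1) → K))]
    (Γ₁ : Finset (Projectivization K (Fin (n + 1) → K)))
    (P₀ : Projectivization K (Fin (n + 1) → K))
    (φ : Module.Dual K (Fin (n + 1) → K)) (hφ : φ ≠ 0)
    (hΓ₁ : ∀ P ∈ Γ₁, φ P.rep = 0)
    (hP₀ : φ P₀.rep ≠ 0)
    (hspan : ∀ ψ : Module.Dual K (Fin (n + 1) → K),
      (∀ P ∈ Γ₁, ψ P.rep = 0) → ∃ c : K, ψ = c • φ)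
    (res : MinFreeRes (n + 1) K
      (vanishingIdeal ((insert P₀ Γ₁ : Finset (Projectivization K (Fin (n + 1) → K))) : Set (Projectivization K (Fin (n + 1) → K)))))
    (hlen : res.len = n) :
    minDist (insert P₀ Γ₁) = 1 ∧ res.aMin = n + 1 ∧
      (minDist (insert P₀ Γ₁) : ℤ) = res.A :=
  hyperplane_points_plus_one_general hn Γ₁ P₀ φ hφ hΓ₁ hP₀ hspan res hlen

end PointsMinDist
end
end
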